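/- arXiv:1212.6777 — 2 statements merged into one kernel-verified Lean document; each statement's English description precedes it below -/
import Mathlib

section
/- Let X = u·T ⊆ (ℂ*)ⁿ be a torsion coset, i.e. u is a torsion point and T = G(Λ) is a connected algebraic subgroup (torus) for a primitive lattice Λ ⊆ ℤⁿ. Then there is a torsion point u' ∈ (ℂ*)ⁿ such that the union of Galois conjugates ⋃_{σ ∈ Gal(ℂ/ℚ)} σ(X) equals the disjoint union ⊔_{z ∈ cl_ℚ(u')} z·G(Λ), where cl_ℚ(u') is the (finite) set of Galois conjugates of u'. -/
open scoped BigOperators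

/-- `G(Λ) = { z ∈ (ℂ*)ⁿ : ∏ᵢ zᵢ^{kᵢ} = 1 for all k ∈ Λ }`. -/
def GSet {n : ℕ} (Λ : Submodule ℤ (Fin n → ℤ)) : Set (Fin n → ℂˣ) :=
  {z | ∀ k ∈ Λ, (∏ i, (z i) ^ (k i)) = 1}

/-- `Λ ⊆ ℤⁿ` is primitive: `Λ = (Λ ⊗ ℚ) ∩ ℤⁿ`. -/
def IsPrimitive {n : ℕ} (Λ : Submodule ℤ (Fin n → ℤ)) : Prop :=
  ∀ k : Fin n → ℤ, ∀ m : ℤ, m ≠ 0 → m • k ∈ Λ → k ∈ Λ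

/-- A torsion point of `(ℂ*)ⁿ`: all coordinates are roots of unity. -/
def IsTorsionPoint {n : ℕ} (u : Fin n → ℂˣ) : Prop :=
  ∀ i, ∃ m : ℕ, 0 < m ∧ (u i) ^ m = 1

/-- Coordinatewise action of a field automorphism of `ℂ` on `(ℂ*)ⁿ`. -/
def galAct {n : ℕ} (σ : ℂ ≃+* ℂ) (z : Fin n → ℂˣ) : Fin n → ℂˣ :=
  fun i => Units.map ((σ : ℂ →+* ℂ) : ℂ →* ℂ) (z i)

/-- The set of Galois conjugates (ℚ-closure) of a point of `(ℂ*)ⁿ`. -/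
def clQ {n : ℕ} (u : Fin n → ℂˣ) : Set (Fin n → ℂˣ) :=
  {v | ∃ σ : ℂ ≃+* ℂ, v = galAct σ u}

/-!
Primitivity makes `ℤⁿ ⧸ Λ` torsion-free, hence free, so `Λ` is a direct summand of `ℤⁿ`; from
this, every torsion element of `G = G(Λ)` is an `m`-th power in `G` for every `m > 0`. Hence
the coset `uG` contains a point `u'` whose order is the order `N` of `uG` in `(ℂ*)ⁿ ⧸ G`, so
`u' ^ d ∈ G` forces `u' ^ d = 1`. Each `σ` acts on the `N`-th roots of unity as `ζ ↦ ζ ^ s`,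
so `σ(u') = u' ^ s`. Thus the conjugates of `u'` are finitely many, `σ(uG) = σ(u')G` because
`G` is Galois stable, and two conjugates in the same coset differ by a power of `u'` lying in
`G`, hence coincide.
-/

open scoped Pointwise

theorem Submodule.exists_retraction_of_projective {R M : Type*} [Ring R] [AddCommGroup M]
    [Module R M] (p : Submodule R M) [Module.Projective R (M ⧸ p)] :
    ∃ r : M →ₗ[R] p, ∀ k : p, r k = k := by
  obtain ⟨s, hs⟩ := p.mkQ.exists_rightInverse_of_surjective p.range_mkQ
  have hproj : ∀ x, x - s (p.mkQ x) ∈ p := fun x => by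
    rw [← Submodule.Quotient.mk_eq_zero, ← Submodule.mkQ_apply, map_sub,
      ← LinearMap.comp_apply p.mkQ s, hs, LinearMap.id_apply, sub_self]
  refine ⟨(LinearMap.id - s ∘ₗ p.mkQ).codRestrict p hproj, fun k => ?_⟩
  ext1
  simp [(Submodule.Quotient.mk_eq_zero p).2 k.2]

theorem IsPrimitive.isTorsionFree_quotient {n : ℕ} {Λ : Submodule ℤ (Fin n → ℤ)}
    (hΛ : IsPrimitive Λ) : Module.IsTorsionFree ℤ ((Fin n → ℤ) ⧸ Λ) :=
  .of_smul_eq_zero fun m x hmx => by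
    induction x using Submodule.Quotient.induction_on with | _ k => ?_
    rw [← Submodule.Quotient.mk_smul, Submodule.Quotient.mk_eq_zero] at hmx
    rw [Submodule.Quotient.mk_eq_zero]
    exact or_iff_not_imp_left.2 fun hm => hΛ k m hm hmx

theorem IsPrimitive.exists_dotProduct_eq_mul {n : ℕ} {Λ : Submodule ℤ (Fin n → ℤ)}
    (hΛ : IsPrimitive Λ) (c : Fin n → ℤ) (M : ℤ) (hdvd : ∀ k ∈ Λ, M ∣ k ⬝ᵥ c) :
    ∃ b : Fin n → ℤ, ∀ k ∈ Λ, k ⬝ᵥ c = M * (k ⬝ᵥ b) := by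
  have := hΛ.isTorsionFree_quotient
  obtain ⟨r, hr⟩ := Λ.exists_retraction_of_projective
  let φ : (Fin n → ℤ) →ₗ[ℤ] ℤ := (dotProductBilin ℤ ℤ).flip c ∘ₗ Λ.subtype ∘ₗ r
  have hφ : ∀ x, M ∣ φ x := fun x => hdvd _ (r x).2
  choose b hb using fun i => hφ fun j => if i = j then 1 else 0
  refine ⟨b, fun k hk => ?_⟩
  have hφk : k ⬝ᵥ c = φ k := by simp [φ, hr ⟨k, hk⟩]
  rw [hφk, LinearMap.pi_apply_eq_sum_univ φ k, dotProduct, Finset.mul_sum]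
  refine Finset.sum_congr rfl fun i _ => ?_
  rw [hb, smul_eq_mul]
  ring

theorem Finset.prod_zpow_eq_zpow_sum {ι A : Type*} [CommGroup A] (s : Finset ι) (f : ι → ℤ)
    (a : A) : ∏ i ∈ s, a ^ f i = a ^ ∑ i ∈ s, f i := by
  induction s using Finset.cons_induction <;> simp [*, zpow_add]

theorem Subgroup.exists_coset_rep_zpow_mem_imp_eq_one {A : Type*} [CommGroup A]
    (G : Subgroup A) (hdiv : ∀ h ∈ G, IsOfFinOrder h → ∀ m : ℕ, 0 < m → ∃ g ∈ G, g ^ m = h)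
    {u : A} (hu : IsOfFinOrder u) :
    ∃ u' : A, u⁻¹ * u' ∈ G ∧ IsOfFinOrder u' ∧ ∀ d : ℤ, u' ^ d ∈ G → u' ^ d = 1 := by
  set N := orderOf (u : A ⧸ G)
  have hN : 0 < N := ((QuotientGroup.mk' G).isOfFinOrder hu).orderOf_pos
  have huN : u ^ N ∈ G := by
    rw [← QuotientGroup.eq_one_iff, QuotientGroup.mk_pow, pow_orderOf_eq_one]
  obtain ⟨g, hg, hgN⟩ := hdiv _ huN hu.pow N hN
  have hu'N : (u * g⁻¹) ^ N = 1 := by rw [mul_pow, inv_pow, hgN, mul_inv_cancel]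
  have hcoset : u⁻¹ * (u * g⁻¹) ∈ G := by simpa using G.inv_mem hg
  refine ⟨u * g⁻¹, hcoset, isOfFinOrder_iff_pow_eq_one.2 ⟨N, hN, hu'N⟩, fun d hd => ?_⟩
  have hdvd : (N : ℤ) ∣ d := by
    refine orderOf_dvd_iff_zpow_eq_one.2 ?_
    rw [QuotientGroup.eq.2 hcoset, ← QuotientGroup.mk_zpow, QuotientGroup.eq_one_iff]
    exact hd
  obtain ⟨e, rfl⟩ := hdvd
  rw [zpow_mul, zpow_natCast, hu'N, one_zpow]

theorem Subgroup.disjoint_leftCoset_of_inv_mul_notMem {α : Type*} [Group α] (G : Subgroup α)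
    {a b : α} (h : a⁻¹ * b ∉ G) : Disjoint (a • (G : Set α)) (b • (G : Set α)) := by
  refine Set.disjoint_left.2 fun x hxa hxb => h ?_
  rw [mem_leftCoset_iff] at hxa hxb
  simpa [mul_assoc] using G.mul_mem hxa (G.inv_mem hxb)

section Monomial

variable {ι A B : Type*} [Fintype ι] [CommGroup A] [CommGroup B]

def monomialHom (k : ι → ℤ) : (ι → A) →* A where
  toFun z := ∏ i, z i ^ k i
  map_one' := by simp
  map_mul' x y := by simp [mul_zpow, Finset.prod_mul_distrib]

theorem monomialHom_apply (k : ι → ℤ) (z : ι → A) : monomialHom k z = ∏ i, z i ^ k i := rfl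

theorem monomialHom_zpow (k c : ι → ℤ) (ζ : A) :
    monomialHom k (fun i => ζ ^ c i) = ζ ^ (k ⬝ᵥ c) := by
  simp [monomialHom_apply, ← zpow_mul, dotProduct, Finset.prod_zpow_eq_zpow_sum, mul_comm]

theorem monomialHom_comp (k : ι → ℤ) (f : A →* B) (z : ι → A) :
    monomialHom k (f ∘ z) = f (monomialHom k z) := by
  simp [monomialHom_apply, map_prod, map_zpow]

end Monomial

theorem mem_GSet_iff {n : ℕ} {Λ : Submodule ℤ (Fin n → ℤ)} {z : Fin n → ℂˣ} :
    z ∈ GSet Λ ↔ ∀ k ∈ Λ, monomialHom k z = 1 := Iff.rfl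

def GSubgroup {n : ℕ} (Λ : Submodule ℤ (Fin n → ℤ)) : Subgroup (Fin n → ℂˣ) :=
  (⨅ k : Λ, (monomialHom (k : Fin n → ℤ)).ker).copy (GSet Λ) (by
    ext z
    simp [mem_GSet_iff])

def galHom {n : ℕ} (σ : ℂ ≃+* ℂ) : (Fin n → ℂˣ) →* (Fin n → ℂˣ) :=
  MonoidHom.compLeft (Units.map (σ : ℂ →* ℂ)) (Fin n)

theorem coe_galHom {n : ℕ} (σ : ℂ ≃+* ℂ) : ⇑(galHom (n := n) σ) = galAct σ := rfl

theorem galAct_galAct_symm {n : ℕ} (σ : ℂ ≃+* ℂ) (z : Fin n → ℂˣ) :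
    galAct σ (galAct σ.symm z) = z := by
  ext i : 2
  simp [galAct]

theorem galAct_mem_GSet {n : ℕ} {Λ : Submodule ℤ (Fin n → ℤ)} (σ : ℂ ≃+* ℂ)
    {z : Fin n → ℂˣ} (hz : z ∈ GSet Λ) : galAct σ z ∈ GSet Λ := fun k hk =>
  (monomialHom_comp k (Units.map (σ : ℂ →* ℂ)) z).trans (by rw [mem_GSet_iff.1 hz k hk, map_one])

theorem image_galAct_GSet {n : ℕ} (Λ : Submodule ℤ (Fin n → ℤ)) (σ : ℂ ≃+* ℂ) :
    galAct σ '' GSet Λ = GSet Λ :=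
  Set.Subset.antisymm (Set.image_subset_iff.2 fun _ => galAct_mem_GSet σ)
    fun z hz => ⟨_, galAct_mem_GSet σ.symm hz, galAct_galAct_symm σ z⟩

theorem image_galAct_smul_GSet {n : ℕ} (Λ : Submodule ℤ (Fin n → ℤ)) (σ : ℂ ≃+* ℂ)
    (u : Fin n → ℂˣ) : galAct σ '' (u • GSet Λ) = galAct σ u • GSet Λ := by
  rw [← coe_galHom, Set.image_smul_distrib, coe_galHom, image_galAct_GSet]

theorem galAct_eq_zpow {n : ℕ} (σ : ℂ ≃+* ℂ) {z : Fin n → ℂˣ} (hz : IsOfFinOrder z) :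
    ∃ s : ℤ, galAct σ z = z ^ s := by
  have : NeZero (orderOf z) := ⟨hz.orderOf_pos.ne'⟩
  obtain ⟨s, hs⟩ := rootsOfUnity.integer_power_of_ringEquiv' (orderOf z) σ
  refine ⟨s, funext fun i => Units.ext (hs (z i) ?_)⟩
  rw [mem_rootsOfUnity, ← Pi.pow_apply, pow_orderOf_eq_one, Pi.one_apply]

theorem isTorsionPoint_iff {n : ℕ} {u : Fin n → ℂˣ} : IsTorsionPoint u ↔ IsOfFinOrder u :=
  ⟨fun hu => .pi fun i => isOfFinOrder_iff_pow_eq_one.2 (hu i),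
    fun hu i => isOfFinOrder_iff_pow_eq_one.1 (hu.apply i)⟩

theorem IsPrimitive.exists_pow_eq_of_mem_GSet {n : ℕ} {Λ : Submodule ℤ (Fin n → ℤ)}
    (hΛ : IsPrimitive Λ) {h : Fin n → ℂˣ} (hG : h ∈ GSet Λ) (hh : IsOfFinOrder h) {m : ℕ}
    (hm : 0 < m) : ∃ g ∈ GSet Λ, g ^ m = h := by
  set M := orderOf h
  have hM : 0 < M := hh.orderOf_pos
  obtain ⟨ζ, hζ⟩ : ∃ ζ : ℂˣ, IsPrimitiveRoot ζ (m * M) := by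
    have := Complex.isPrimitiveRoot_exp (m * M) (by positivity)
    exact ⟨(this.isUnit (by positivity)).unit, IsPrimitiveRoot.coe_units_iff.1 this⟩
  have hζm : IsPrimitiveRoot (ζ ^ m) M := hζ.pow (by positivity) rfl
  have hexp : ∀ i, ∃ c : ℤ, (ζ ^ m) ^ c = h i := fun i => by
    have : NeZero M := ⟨hM.ne'⟩
    rw [← Subgroup.mem_zpowers_iff, hζm.zpowers_eq, mem_rootsOfUnity, ← Pi.pow_apply,
      pow_orderOf_eq_one, Pi.one_apply]
  choose c hc using hexp
  have hdvd : ∀ k ∈ Λ, (M : ℤ) ∣ k ⬝ᵥ c := fun k hk => by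
    rw [← hζm.zpow_eq_one_iff_dvd, ← monomialHom_zpow, funext hc]
    exact mem_GSet_iff.1 hG k hk
  obtain ⟨b, hb⟩ := hΛ.exists_dotProduct_eq_mul c M hdvd
  refine ⟨fun i => ζ ^ (c - M • b) i, mem_GSet_iff.2 fun k hk => ?_, funext fun i => ?_⟩
  · rw [monomialHom_zpow, dotProduct_sub, dotProduct_smul, hb k hk]
    simp
  · calc (ζ ^ (c - M • b) i) ^ m = (ζ ^ m) ^ c i * (ζ ^ (m * M)) ^ (-b i) := by
          simp only [← zpow_natCast, ← zpow_mul, ← zpow_add]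
          congr 1
          simp only [Pi.sub_apply, Pi.smul_apply]
          push_cast
          ring
      _ = h i := by rw [hζ.pow_eq_one, one_zpow, mul_one, hc i]

/-- for a torsion coset `X = u · G(Λ)` (with `u` a torsion point
and `Λ` primitive), there is a torsion point `u'` such that the union of the
Galois conjugates of `X` is the disjoint union of the cosets `z · G(Λ)` over
the (finitely many) Galois conjugates `z` of `u'`. -/
theorem clQ_torsion_coset (n : ℕ) (Λ : Submodule ℤ (Fin n → ℤ))
    (hΛ : IsPrimitive Λ) (u : Fin n → ℂˣ) (hu : IsTorsionPoint u) :
    ∃ u' : Fin n → ℂˣ, IsTorsionPoint u' ∧ (clQ u').Finite ∧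
      (⋃ σ : ℂ ≃+* ℂ, galAct σ '' ((fun t => u * t) '' GSet Λ)) =
        (⋃ z ∈ clQ u', (fun t => z * t) '' GSet Λ) ∧
      (∀ z ∈ clQ u', ∀ w ∈ clQ u', z ≠ w →
        Disjoint ((fun t => z * t) '' GSet Λ) ((fun t => w * t) '' GSet Λ)) := by
  obtain ⟨u', hcoset, hu', hzpow⟩ := (GSubgroup Λ).exists_coset_rep_zpow_mem_imp_eq_one
    (fun _ hG hh _ hm => hΛ.exists_pow_eq_of_mem_GSet hG hh hm) (isTorsionPoint_iff.1 hu)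
  have hclQ : clQ u' = Set.range fun σ => galAct σ u' := by
    ext
    simp [clQ, eq_comm]
  have hcoset_eq : u • GSet Λ = u' • GSet Λ := leftCoset_eq_iff (s := GSubgroup Λ) |>.2 hcoset
  refine ⟨u', isTorsionPoint_iff.2 hu', hu'.finite_zpowers.subset ?_, ?_, ?_⟩
  · rintro _ ⟨σ, rfl⟩
    obtain ⟨s, hs⟩ := galAct_eq_zpow σ hu'
    exact ⟨s, hs.symm⟩
  · simp only [← smul_eq_mul, Set.image_smul, hcoset_eq, image_galAct_smul_GSet, hclQ,
      Set.biUnion_range]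
  · rintro _ ⟨σ, rfl⟩ _ ⟨τ, rfl⟩ hne
    obtain ⟨s, hs⟩ := galAct_eq_zpow σ hu'
    obtain ⟨t, ht⟩ := galAct_eq_zpow τ hu'
    simp only [← smul_eq_mul, Set.image_smul]
    refine (GSubgroup Λ).disjoint_leftCoset_of_inv_mul_notMem fun hmem => hne ?_
    rw [hs, ht, ← zpow_neg, ← zpow_add] at hmem
    rw [hs, ht, ← inv_mul_eq_one, ← zpow_neg, ← zpow_add]
    exact hzpow _ hmem
end

section
/- Let C be a finite complex of finitely generated free ℤ[ℤⁿ]-modules with boundary maps ∂_j given by matrices over ℤ[ℤⁿ]. Fix an index k and let D = ∂_k* ∂_k + ∂_{k+1} ∂_{k+1}*, a square matrix over ℤ[ℤⁿ]. Then H_k(C ⊗_{ℤ[ℤⁿ]} F) = 0, where F is the field of fractions of ℤ[ℤⁿ], if and only if det(D) ≠ 0 as a Laurent polynomial. -/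
/-!
Extend `f ↦ f*` to an involution of `F`. The constant coefficient of `∑ wᵢ* wᵢ` is the sum of
the squares of all coefficients of the `wᵢ`, so the form `⟨v, w⟩ = ∑ vᵢ* wᵢ` is anisotropic over
`ℤ[ℤⁿ]`, and hence over `F` after clearing denominators. Writing `D = Cᴴ C` with `C` the stack of
`∂_k` and `∂_{k+1}*`, anisotropy gives `ker D = ker ∂_k ∩ ker ∂_{k+1}*`. A chain in this kernel
that is a boundary `∂_{k+1} y` has `∂_{k+1}* ∂_{k+1} y = 0`, so it vanishes; this gives `det D ≠ 0`
when the homology vanishes. Conversely, if `D` is invertible, a cycle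
`x = ∂_k* ∂_k u + ∂_{k+1} ∂_{k+1}* u` satisfies `∂_k ∂_k* (∂_k u) = 0`, hence `∂_k* ∂_k u = 0`,
and `x` is a boundary.
-/

open scoped BigOperators

/-- The Laurent polynomial ring `ℤ[ℤⁿ] = ℤ[t₁^{±1},…,tₙ^{±1}]`, coded as the
group ring of `ℤⁿ` over `ℤ`. -/
abbrev LaurentZn (n : ℕ) := AddMonoidAlgebra ℤ (Fin n → ℤ)

/-- The involution `f ↦ f*` of `ℤ[ℤⁿ]`: `(Σ aⱼ gⱼ)* = Σ aⱼ gⱼ⁻¹`. -/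
noncomputable def laurentStar {n : ℕ} (f : LaurentZn n) : LaurentZn n :=
  AddMonoidAlgebra.mapDomain (fun g => -g) f

/-- The adjoint of a matrix over `ℤ[ℤⁿ]`: `(O*)_{ij} = (O_{ji})*`. -/
noncomputable def adjMat {n : ℕ} {a b : Type*} (O : Matrix a b (LaurentZn n)) :
    Matrix b a (LaurentZn n) := fun i j => laurentStar (O j i)

open Matrix

universe u

-- Stands in for positive definiteness: the fraction field of `ℤ[ℤⁿ]` has no order compatible
-- with its involution.
def StarAnisotropic (K : Type*) [Semiring K] [Star K] : Prop :=
  ∀ ⦃ι : Type u⦄ [Fintype ι] (v : ι → K), star v ⬝ᵥ v = 0 → v = 0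

section StarAnisotropic

variable {K : Type*}

theorem conjTranspose_mul_self_mulVec_eq_zero_iff [Semiring K] [StarRing K]
    {m n : Type*} [Fintype m] [Fintype n] (hm : ∀ v : m → K, star v ⬝ᵥ v = 0 → v = 0)
    (A : Matrix m n K) (x : n → K) : (Aᴴ * A) *ᵥ x = 0 ↔ A *ᵥ x = 0 := by
  refine ⟨fun h => hm _ ?_, fun h => by rw [← mulVec_mulVec, h, mulVec_zero]⟩
  rw [← mulVec_mulVec] at h
  rw [star_mulVec, ← dotProduct_mulVec, h, dotProduct_zero]

theorem laplacian_mulVec_eq_zero_iff [Semiring K] [StarRing K] {m n l : Type u}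
    [Fintype m] [Fintype n] [Fintype l] (hK : StarAnisotropic.{u} K)
    (A : Matrix m n K) (B : Matrix n l K) (x : n → K) :
    (Aᴴ * A + B * Bᴴ) *ᵥ x = 0 ↔ A *ᵥ x = 0 ∧ Bᴴ *ᵥ x = 0 := by
  have hD : Aᴴ * A + B * Bᴴ = (fromRows A Bᴴ)ᴴ * fromRows A Bᴴ := by
    rw [conjTranspose_fromRows_eq_fromCols_conjTranspose, fromCols_mul_fromRows,
      conjTranspose_conjTranspose]
  rw [hD, conjTranspose_mul_self_mulVec_eq_zero_iff (hK (ι := m ⊕ l)), fromRows_mulVec,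
    ← Sum.elim_zero_zero, Sum.elim_eq_iff]

theorem ker_toLin'_eq_range_iff_det_laplacian_ne_zero [Field K] [StarRing K] {m n l : Type u}
    [Fintype m] [Fintype n] [Fintype l] [DecidableEq n] [DecidableEq l]
    (hK : StarAnisotropic.{u} K) (A : Matrix m n K) (B : Matrix n l K) (hAB : A * B = 0) :
    LinearMap.ker (toLin' A) = LinearMap.range (toLin' B) ↔ (Aᴴ * A + B * Bᴴ).det ≠ 0 := by
  have hAB_vec : ∀ y, A *ᵥ (B *ᵥ y) = 0 := fun y => by rw [mulVec_mulVec, hAB, zero_mulVec]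
  rw [Ne, ← exists_mulVec_eq_zero_iff, not_exists]
  constructor
  · rintro hker x ⟨hx, hDx⟩
    obtain ⟨hAx, hBx⟩ := (laplacian_mulVec_eq_zero_iff hK A B x).1 hDx
    have hx_mem : x ∈ LinearMap.range (toLin' B) := by
      rw [← hker, LinearMap.mem_ker, toLin'_apply, hAx]
    obtain ⟨y, rfl⟩ := hx_mem
    rw [toLin'_apply] at hx hBx
    exact hx ((conjTranspose_mul_self_mulVec_eq_zero_iff (hK (ι := n)) B y).1
      (by rw [← mulVec_mulVec, hBx]))
  · intro hD
    have hunit : IsUnit (Aᴴ * A + B * Bᴴ).det := by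
      rw [isUnit_iff_ne_zero, Ne, ← exists_mulVec_eq_zero_iff, not_exists]; exact hD
    refine le_antisymm (fun x hx => ?_) (LinearMap.range_le_ker_iff.2 ?_)
    · obtain ⟨u, rfl⟩ : ∃ u, (Aᴴ * A + B * Bᴴ) *ᵥ u = x :=
        ⟨(Aᴴ * A + B * Bᴴ)⁻¹ *ᵥ x, by rw [mulVec_mulVec, mul_nonsing_inv _ hunit, one_mulVec]⟩
      rw [LinearMap.mem_ker, toLin'_apply, add_mulVec, mulVec_add, ← mulVec_mulVec,
        ← mulVec_mulVec, hAB_vec, add_zero] at hx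
      have hAu : Aᴴ *ᵥ (A *ᵥ u) = 0 := by
        rwa [← conjTranspose_mul_self_mulVec_eq_zero_iff (hK (ι := n)) Aᴴ,
          conjTranspose_conjTranspose, ← mulVec_mulVec]
      refine ⟨Bᴴ *ᵥ u, ?_⟩
      rw [toLin'_apply, add_mulVec, ← mulVec_mulVec, ← mulVec_mulVec, hAu, zero_add]
    · rw [← toLin'_mul, hAB, map_zero]

end StarAnisotropic

theorem IsFractionRing.eq_zero_of_sum_map_mul_self_eq_zero {R K ι : Type*} [CommRing R] [Field K]
    [Algebra R K] [IsFractionRing R K] [Fintype ι] (τ : R →+* R) (σ : K →+* K)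
    (hστ : ∀ r, σ (algebraMap R K r) = algebraMap R K (τ r))
    (hR : ∀ w : ι → R, ∑ i, τ (w i) * w i = 0 → w = 0) {v : ι → K}
    (hv : ∑ i, σ (v i) * v i = 0) : v = 0 := by
  obtain ⟨b, hb⟩ := IsLocalization.exist_integer_multiples_of_finite (nonZeroDivisors R) v
  choose w hw using hb
  have hb0 : algebraMap R K b ≠ 0 := (IsLocalization.map_units K b).ne_zero
  have hw0 : w = 0 := by
    refine hR w (IsFractionRing.injective R K ?_)
    calc algebraMap R K (∑ i, τ (w i) * w i)
        = σ (algebraMap R K b) * algebraMap R K b * ∑ i, σ (v i) * v i := by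
          simp only [map_sum, map_mul, ← hστ, hw, Algebra.smul_def, Finset.mul_sum]
          exact Finset.sum_congr rfl fun i _ => by ring
      _ = algebraMap R K 0 := by rw [hv, mul_zero, map_zero]
  funext i
  have hbv := hw i
  rw [hw0, Pi.zero_apply, map_zero, Algebra.smul_def, eq_comm] at hbv
  exact (mul_eq_zero.1 hbv).resolve_left hb0

noncomputable def laurentStarRingEquiv (n : ℕ) : LaurentZn n ≃+* LaurentZn n :=
  AddMonoidAlgebra.mapDomainRingEquiv ℤ (AddEquiv.neg (Fin n → ℤ))

section LaurentStar

variable {n : ℕ}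

theorem laurentStarRingEquiv_apply (f : LaurentZn n) :
    laurentStarRingEquiv n f = laurentStar f := rfl

theorem laurentStarRingEquiv_symm : (laurentStarRingEquiv n).symm = laurentStarRingEquiv n := rfl

theorem laurentStar_coeff (f : LaurentZn n) (g : Fin n → ℤ) :
    (laurentStar f).coeff g = f.coeff (-g) := by
  rw [← laurentStarRingEquiv_apply, laurentStarRingEquiv,
    AddMonoidAlgebra.coeff_mapDomainRingEquiv]
  rfl

theorem laurentStar_mul_self_coeff_zero (f : LaurentZn n) :
    (laurentStar f * f).coeff 0 = ∑ g ∈ f.coeff.support, f.coeff g ^ 2 := by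
  rw [AddMonoidAlgebra.coeff_mul_apply_right, Finsupp.sum]
  refine Finset.sum_congr rfl fun g _ => ?_
  rw [laurentStar_coeff, zero_add, neg_neg, sq]

theorem eq_zero_of_sum_laurentStar_mul_self_eq_zero {ι : Type*} [Fintype ι]
    {w : ι → LaurentZn n} (h : ∑ i, laurentStar (w i) * w i = 0) : w = 0 := by
  have hcoeff : ∑ i, ∑ g ∈ (w i).coeff.support, (w i).coeff g ^ 2 = 0 := by
    simpa [laurentStar_mul_self_coeff_zero] using congrArg (fun f => f.coeff 0) h
  have hsq i : ∑ g ∈ (w i).coeff.support, (w i).coeff g ^ 2 = 0 :=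
    (Fintype.sum_eq_zero_iff_of_nonneg fun i => Finset.sum_nonneg fun g _ => sq_nonneg _).1
      hcoeff |> congrFun (a := i)
  funext i
  ext g
  by_cases hg : g ∈ (w i).coeff.support
  · exact pow_eq_zero_iff two_ne_zero |>.1 <|
      (Finset.sum_eq_zero_iff_of_nonneg fun g _ => sq_nonneg _).1 (hsq i) g hg
  · simpa using hg

end LaurentStar

section FractionField

variable (n : ℕ) (F : Type*) [Field F] [Algebra (LaurentZn n) F] [IsFractionRing (LaurentZn n) F]

noncomputable def fracStar : F ≃+* F :=
  IsFractionRing.ringEquivOfRingEquiv (laurentStarRingEquiv n)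

theorem fracStar_algebraMap (r : LaurentZn n) :
    fracStar n F (algebraMap (LaurentZn n) F r) = algebraMap (LaurentZn n) F (laurentStar r) :=
  IsFractionRing.ringEquivOfRingEquiv_algebraMap _ r

theorem fracStar_symm : (fracStar n F).symm = fracStar n F := by
  rw [fracStar, IsFractionRing.ringEquivOfRingEquiv_symm, laurentStarRingEquiv_symm]

theorem fracStar_fracStar (x : F) : fracStar n F (fracStar n F x) = x := by
  nth_rw 1 [← fracStar_symm]
  exact RingEquiv.symm_apply_apply _ x

noncomputable abbrev fracStarRing : StarRing F where
  star := fracStar n F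
  star_involutive := fracStar_fracStar n F
  star_mul x y := by rw [map_mul, mul_comm]
  star_add := map_add (fracStar n F)

end FractionField

/-- let `C` be a complex of finitely generated free
`ℤ[ℤⁿ]`-modules with `∂_k` and `∂_{k+1}` given by the matrices `P`, `Q`
(`P * Q = 0`), and let `D = ∂_k* ∂_k + ∂_{k+1} ∂_{k+1}*`.  Then
`H_k(C ⊗ F) = 0` (i.e. `ker(∂_k ⊗ F) = im(∂_{k+1} ⊗ F)`), where `F` is the
field of fractions of `ℤ[ℤⁿ]`, if and only if `det D ≠ 0` as a Laurent
polynomial. -/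
theorem homology_vanishes_iff_det_laplacian_ne_zero
    (n : ℕ) (F : Type*) [Field F] [Algebra (LaurentZn n) F]
    [IsFractionRing (LaurentZn n) F]
    (bkm1 bk bk1 : ℕ)
    (P : Matrix (Fin bkm1) (Fin bk) (LaurentZn n))
    (Q : Matrix (Fin bk) (Fin bk1) (LaurentZn n))
    (hPQ : P * Q = 0) :
    LinearMap.ker (Matrix.toLin' (P.map (algebraMap (LaurentZn n) F))) =
        LinearMap.range (Matrix.toLin' (Q.map (algebraMap (LaurentZn n) F))) ↔
      Matrix.det (adjMat P * P + Q * adjMat Q) ≠ 0 := by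
  let : StarRing F := fracStarRing n F
  set φ := algebraMap (LaurentZn n) F
  have hF : StarAnisotropic.{0} F := fun ι _ v hv =>
    IsFractionRing.eq_zero_of_sum_map_mul_self_eq_zero (laurentStarRingEquiv n).toRingHom
      (fracStar n F).toRingHom (fracStar_algebraMap n F)
      (fun w hw => eq_zero_of_sum_laurentStar_mul_self_eq_zero hw) hv
  have hadj {a b : Type} (M : Matrix a b (LaurentZn n)) : (adjMat M).map φ = (M.map φ)ᴴ := by
    ext i j; exact (fracStar_algebraMap n F (M j i)).symm
  have hD : (adjMat P * P + Q * adjMat Q).map φ =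
      (P.map φ)ᴴ * P.map φ + Q.map φ * (Q.map φ)ᴴ := by
    rw [Matrix.map_add _ (map_add φ), Matrix.map_mul, Matrix.map_mul, hadj, hadj]
  have hPQ' : P.map φ * Q.map φ = 0 := by
    rw [← Matrix.map_mul, hPQ, Matrix.map_zero _ (map_zero φ)]
  rw [ker_toLin'_eq_range_iff_det_laplacian_ne_zero hF _ _ hPQ', ← hD, ← RingHom.mapMatrix_apply,
    ← RingHom.map_det, map_ne_zero_iff φ (IsFractionRing.injective _ F)]
end
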